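/- arXiv:1909.12106 — 6 statements merged into one kernel-verified Lean document; each statement's English description precedes it below -/
import Mathlib

section
/- Let 0 < θ < θ₀, let L ≥ 0, and let g : [−1,1] → ℝ be Lipschitz continuous with Lipschitz constant L and satisfy g(−1) = g(1) = 0. Then for every r ∈ (−1,1), g(r)²·|F_log''(r)| ≤ 2·L²·(θ + 4θ₀), where F_log''(r) = θ/(1−r²) − θ₀. -/
/-- Let `0 < θ < θ₀`, `L ≥ 0`, and let `g : [−1,1] → ℝ` be `L`-Lipschitz with
`g(−1) = g(1) = 0`. Then for every `r ∈ (−1,1)`,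
`g(r)²·|F_log''(r)| ≤ 2·L²·(θ + 4θ₀)`, where `F_log''(r) = θ/(1−r²) − θ₀`. -/
theorem stmt8 (θ θ₀ L : ℝ) (hθ : 0 < θ) (hθθ₀ : θ < θ₀) (hL : 0 ≤ L) (g : ℝ → ℝ)
    (hlip : ∀ x ∈ Set.Icc (-1 : ℝ) 1, ∀ y ∈ Set.Icc (-1 : ℝ) 1, |g x - g y| ≤ L * |x - y|)
    (hgm : g (-1) = 0) (hgp : g 1 = 0) :
    ∀ r ∈ Set.Ioo (-1 : ℝ) 1,
      (g r) ^ 2 * |θ / (1 - r ^ 2) - θ₀| ≤ 2 * L ^ 2 * (θ + 4 * θ₀) := by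
  intro r hr
  obtain ⟨h1, h2⟩ := hr
  have hrI : r ∈ Set.Icc (-1 : ℝ) 1 := ⟨le_of_lt h1, le_of_lt h2⟩
  have hm : |g r| ≤ L * (1 + r) := by
    have h := hlip r hrI (-1) ⟨le_refl _, by norm_num⟩
    rwa [hgm, sub_zero, show r - -1 = 1 + r by ring, show |1 + r| = 1 + r from abs_of_nonneg (by linarith)] at h
  have hp : |g r| ≤ L * (1 - r) := by
    have h := hlip r hrI 1 ⟨by norm_num, le_refl _⟩
    rwa [hgp, sub_zero, show |r - 1| = 1 - r by rw [abs_of_nonpos (by linarith)]; ring] at h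
  have hab : (0:ℝ) < 1 - r ^ 2 := by nlinarith
  have hg2 : g r ^ 2 ≤ L ^ 2 * (1 - r ^ 2) := by
    have := mul_le_mul hm hp (abs_nonneg _) (mul_nonneg hL (by linarith))
    calc g r ^ 2 = |g r| * |g r| := by rw [← abs_mul, sq, abs_mul_self]
    _ ≤ (L * (1 + r)) * (L * (1 - r)) := this
    _ = L ^ 2 * (1 - r ^ 2) := by ring
  have habs : |θ / (1 - r ^ 2) - θ₀| ≤ θ / (1 - r ^ 2) + θ₀ := by
    have h1 : 0 < θ / (1 - r ^ 2) := by positivity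
    rw [abs_sub_le_iff]
    constructor <;> linarith
  have key : g r ^ 2 * |θ / (1 - r ^ 2) - θ₀| ≤ L ^ 2 * (1 - r ^ 2) * (θ / (1 - r ^ 2) + θ₀) := by
    apply mul_le_mul hg2 habs (abs_nonneg _) (by positivity)
  have heq : L ^ 2 * (1 - r ^ 2) * (θ / (1 - r ^ 2) + θ₀) = L ^ 2 * θ + L ^ 2 * θ₀ * (1 - r ^ 2) := by
    field_simp
  rw [heq] at key
  nlinarith [key, mul_nonneg (sq_nonneg L) hθ.le, mul_nonneg (sq_nonneg L) (by linarith : (0:ℝ) ≤ θ₀), mul_nonneg (mul_nonneg (sq_nonneg L) (by linarith : (0:ℝ) ≤ θ₀)) (sq_nonneg r)]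
end

section
/- Let ε ∈ (0,1/4), L ≥ 0, and let m : [−1,1] → [0,∞) be Lipschitz continuous with Lipschitz constant L, with m(r) > 0 for every r ∈ (−1,1) and m(−1) = m(1) = 0. Define m_ε : ℝ → ℝ by m_ε(r) = m(r) for |r| ≤ 1−ε, m_ε(r) = m(1−ε) for r > 1−ε, and m_ε(r) = m(−1+ε) for r < −1+ε, and let M_ε : ℝ → ℝ be twice differentiable with M_ε(0) = 0, M_ε'(0) = 0 and M_ε''(r) = 1/m_ε(r) for all r ∈ ℝ. Then for every r ∈ ℝ, (max(|r|−1, 0))² ≤ 2·ε·L·M_ε(r). -/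
/-!
Since `M_ε'' = 1/m_ε > 0` and `M_ε(0) = M_ε'(0) = 0`, the function `M_ε` is nonnegative and
increasing on `[0, ∞)`. Beyond `1 - ε` the truncated mobility is the constant `m(1 - ε)`, which is
at most `εL` because `m` is `L`-Lipschitz and vanishes at `1`; hence `M_ε'' ≥ 1/(εL)` on
`[1, ∞)`, and Taylor's formula at `1` gives `M_ε(r) ≥ (r - 1)²/(2εL)`. The case `r ≤ -1` is the
same argument for `r ↦ M_ε(-r)`.
-/

open Set

theorem le_of_hasDerivAt_le_of_le_Ici {f g f' g' : ℝ → ℝ} {a x : ℝ}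
    (hf : ∀ y, HasDerivAt f (f' y) y) (hg : ∀ y, HasDerivAt g (g' y) y)
    (hle : ∀ y, a < y → g' y ≤ f' y) (ha : g a ≤ f a) (hx : a ≤ x) : g x ≤ f x := by
  have hmono : MonotoneOn (f - g) (Ici a) := by
    refine monotoneOn_of_hasDerivWithinAt_nonneg (convex_Ici a)
      (fun y _ => ((hf y).sub (hg y)).continuousAt.continuousWithinAt)
      (fun y _ => ((hf y).sub (hg y)).hasDerivWithinAt) fun y hy => ?_
    rw [interior_Ici] at hy
    exact sub_nonneg.2 (hle y hy)
  have := hmono self_mem_Ici hx hx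
  simp only [Pi.sub_apply] at this
  linarith

theorem taylor_le_of_le_deriv2_Ici {f f' f'' : ℝ → ℝ} {a κ x : ℝ}
    (hf : ∀ y, HasDerivAt f (f' y) y) (hf' : ∀ y, HasDerivAt f' (f'' y) y)
    (hκ : ∀ y, a < y → κ ≤ f'' y) (hx : a ≤ x) :
    f a + f' a * (x - a) + κ / 2 * (x - a) ^ 2 ≤ f x := by
  have hline : ∀ y, HasDerivAt (fun y => f' a + κ * (y - a)) κ y := fun y => by
    simpa using (((hasDerivAt_id' y).sub_const a).const_mul κ).const_add (f' a)
  have hparabola : ∀ y, HasDerivAt (fun y => f a + f' a * (y - a) + κ / 2 * (y - a) ^ 2)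
      (f' a + κ * (y - a)) y := fun y => by
    have hshift := (hasDerivAt_id' y).sub_const a
    exact (((hshift.const_mul (f' a)).const_add (f a)).add
      ((hshift.pow 2).const_mul (κ / 2))).congr_deriv (by norm_num; ring)
  have hderiv : ∀ y, a ≤ y → f' a + κ * (y - a) ≤ f' y := fun y hy =>
    le_of_hasDerivAt_le_of_le_Ici hf' hline hκ (by simp) hy
  exact le_of_hasDerivAt_le_of_le_Ici hf hparabola (fun y hy => hderiv y hy.le) (by simp) hx

theorem sq_max_sub_one_le_of_inv_le_deriv2 {F F' G : ℝ → ℝ} {c r : ℝ} (hc : 0 < c)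
    (hF : ∀ y, HasDerivAt F (F' y) y) (hF' : ∀ y, HasDerivAt F' (G y) y)
    (hF0 : F 0 = 0) (hF'0 : F' 0 = 0) (hG_nonneg : ∀ y, 0 < y → 0 ≤ G y)
    (hG : ∀ y, 1 < y → c⁻¹ ≤ G y) (hr : 0 ≤ r) :
    max (r - 1) 0 ^ 2 ≤ 2 * c * F r := by
  have hF_nonneg : ∀ x, 0 ≤ x → 0 ≤ F x := fun x hx => by
    simpa [hF0, hF'0] using taylor_le_of_le_deriv2_Ici hF hF' hG_nonneg hx
  rcases le_total r 1 with hr1 | hr1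
  · rw [max_eq_right (by linarith)]
    simpa using mul_nonneg (by positivity : (0 : ℝ) ≤ 2 * c) (hF_nonneg r hr)
  · rw [max_eq_left (by linarith)]
    have hF'1 : 0 ≤ F' 1 := le_of_hasDerivAt_le_of_le_Ici hF' (fun y => hasDerivAt_const y 0)
      hG_nonneg hF'0.ge zero_le_one
    have htaylor := taylor_le_of_le_deriv2_Ici hF hF' hG hr1
    have hquad : c⁻¹ / 2 * (r - 1) ^ 2 ≤ F r := by
      nlinarith [hF_nonneg 1 zero_le_one, mul_nonneg hF'1 (sub_nonneg.2 hr1)]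
    calc (r - 1) ^ 2 = 2 * c * (c⁻¹ / 2 * (r - 1) ^ 2) := by field_simp
      _ ≤ 2 * c * F r := by gcongr

section TruncatedMobility

variable {m mε : ℝ → ℝ} {ε L : ℝ}

theorem lipschitz_const_pos
    (hm_lip : ∀ x ∈ Icc (-1 : ℝ) 1, ∀ y ∈ Icc (-1 : ℝ) 1, |m x - m y| ≤ L * |x - y|)
    (hm_pos : ∀ r ∈ Ioo (-1 : ℝ) 1, 0 < m r) (hm1 : m 1 = 0) : 0 < L := by
  have h := hm_lip 0 (by norm_num) 1 (by norm_num)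
  rw [hm1, sub_zero, abs_of_pos (hm_pos 0 (by norm_num))] at h
  norm_num at h
  linarith [hm_pos 0 (by norm_num)]

theorem truncation_pos (hε0 : 0 < ε) (hε2 : ε < 2) (hm_pos : ∀ r ∈ Ioo (-1 : ℝ) 1, 0 < m r)
    (hmε1 : ∀ r : ℝ, |r| ≤ 1 - ε → mε r = m r)
    (hmε2 : ∀ r : ℝ, 1 - ε < r → mε r = m (1 - ε))
    (hmε3 : ∀ r : ℝ, r < -1 + ε → mε r = m (-1 + ε)) (r : ℝ) : 0 < mε r := by
  rcases le_or_gt |r| (1 - ε) with hr | hr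
  · rw [hmε1 r hr]
    exact hm_pos r ⟨by linarith [neg_abs_le r], by linarith [le_abs_self r]⟩
  · rcases lt_abs.1 hr with hr | hr
    · rw [hmε2 r hr]
      exact hm_pos _ ⟨by linarith, by linarith⟩
    · rw [hmε3 r (by linarith)]
      exact hm_pos _ ⟨by linarith, by linarith⟩

theorem truncation_le_of_one_sub_lt (hε0 : 0 ≤ ε) (hε2 : ε ≤ 2)
    (hm_lip : ∀ x ∈ Icc (-1 : ℝ) 1, ∀ y ∈ Icc (-1 : ℝ) 1, |m x - m y| ≤ L * |x - y|)
    (hm1 : m 1 = 0) (hmε2 : ∀ r : ℝ, 1 - ε < r → mε r = m (1 - ε)) {r : ℝ} (hr : 1 - ε < r) :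
    mε r ≤ ε * L := by
  have h := hm_lip (1 - ε) ⟨by linarith, by linarith⟩ 1 (by norm_num)
  rw [hm1, sub_zero, show 1 - ε - 1 = -ε by ring, abs_neg, abs_of_nonneg hε0] at h
  rw [hmε2 r hr, mul_comm]
  exact (le_abs_self _).trans h

theorem truncation_le_of_lt_neg_one_add (hε0 : 0 ≤ ε) (hε2 : ε ≤ 2)
    (hm_lip : ∀ x ∈ Icc (-1 : ℝ) 1, ∀ y ∈ Icc (-1 : ℝ) 1, |m x - m y| ≤ L * |x - y|)
    (hm1' : m (-1) = 0) (hmε3 : ∀ r : ℝ, r < -1 + ε → mε r = m (-1 + ε)) {r : ℝ}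
    (hr : r < -1 + ε) : mε r ≤ ε * L := by
  have h := hm_lip (-1 + ε) ⟨by linarith, by linarith⟩ (-1) (by norm_num)
  rw [hm1', sub_zero, show -1 + ε - -1 = ε by ring, abs_of_nonneg hε0] at h
  rw [hmε3 r hr, mul_comm]
  exact (le_abs_self _).trans h

end TruncatedMobility

theorem stmt10_general (ε L : ℝ) (hε : ε ∈ Set.Ioo (0 : ℝ) (1 / 4))
    (m : ℝ → ℝ)
    (hm_lip : ∀ x ∈ Set.Icc (-1 : ℝ) 1, ∀ y ∈ Set.Icc (-1 : ℝ) 1, |m x - m y| ≤ L * |x - y|)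
    (hm_pos : ∀ r ∈ Set.Ioo (-1 : ℝ) 1, 0 < m r)
    (hm1 : m 1 = 0) (hm1' : m (-1) = 0)
    (mε : ℝ → ℝ)
    (hmε1 : ∀ r : ℝ, |r| ≤ 1 - ε → mε r = m r)
    (hmε2 : ∀ r : ℝ, 1 - ε < r → mε r = m (1 - ε))
    (hmε3 : ∀ r : ℝ, r < -1 + ε → mε r = m (-1 + ε))
    (Mε Mε' : ℝ → ℝ)
    (hM0 : Mε 0 = 0) (hM'0 : Mε' 0 = 0)
    (hMd1 : ∀ r : ℝ, HasDerivAt Mε (Mε' r) r)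
    (hMd2 : ∀ r : ℝ, HasDerivAt Mε' (1 / mε r) r) :
    ∀ r : ℝ, (max (|r| - 1) 0) ^ 2 ≤ 2 * ε * L * Mε r := by
  obtain ⟨hε0, hε4⟩ := hε
  have hc : 0 < ε * L := mul_pos hε0 (lipschitz_const_pos hm_lip hm_pos hm1)
  have hmε_pos := truncation_pos hε0 (by linarith) hm_pos hmε1 hmε2 hmε3
  have hinv_le : ∀ y, mε y ≤ ε * L → (ε * L)⁻¹ ≤ 1 / mε y := fun y hy => by
    rw [one_div]
    exact inv_anti₀ (hmε_pos y) hy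
  intro r
  rw [show 2 * ε * L = 2 * (ε * L) by ring]
  rcases le_total 0 r with hr | hr
  · rw [abs_of_nonneg hr]
    exact sq_max_sub_one_le_of_inv_le_deriv2 hc hMd1 hMd2 hM0 hM'0
      (fun y _ => (one_div_pos.2 (hmε_pos y)).le)
      (fun y hy => hinv_le y (truncation_le_of_one_sub_lt hε0.le (by linarith) hm_lip hm1 hmε2
        (by linarith))) hr
  · rw [abs_of_nonpos hr]
    simpa using sq_max_sub_one_le_of_inv_le_deriv2 (F := fun y => Mε (-y))
      (F' := fun y => -Mε' (-y)) (G := fun y => 1 / mε (-y)) hc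
      (fun y => ((hMd1 (-y)).comp y (hasDerivAt_neg' y)).congr_deriv (mul_neg_one _))
      (fun y => ((hMd2 (-y)).comp y (hasDerivAt_neg' y)).neg.congr_deriv (by ring))
      (by simpa using hM0) (by simp [hM'0]) (fun y _ => (one_div_pos.2 (hmε_pos (-y))).le)
      (fun y hy => hinv_le (-y) (truncation_le_of_lt_neg_one_add hε0.le (by linarith) hm_lip hm1'
        hmε3 (by linarith))) (neg_nonneg.2 hr)

/-- Let `ε ∈ (0,1/4)`, `L ≥ 0`, and let `m : [−1,1] → [0,∞)` be `L`-Lipschitz, positive on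
`(−1,1)` and vanishing exactly at `±1`. Let `m_ε` be the truncation of `m` at level `1−ε`
and let `M_ε` satisfy `M_ε(0) = M_ε'(0) = 0` and `M_ε'' = 1/m_ε`. Then for every `r ∈ ℝ`,
`(max(|r|−1, 0))² ≤ 2·ε·L·M_ε(r)`. -/
theorem stmt10 (ε L : ℝ) (hε : ε ∈ Set.Ioo (0 : ℝ) (1 / 4)) (hL : 0 ≤ L)
    (m : ℝ → ℝ)
    (hm_lip : ∀ x ∈ Set.Icc (-1 : ℝ) 1, ∀ y ∈ Set.Icc (-1 : ℝ) 1, |m x - m y| ≤ L * |x - y|)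
    (hm_nonneg : ∀ r ∈ Set.Icc (-1 : ℝ) 1, 0 ≤ m r)
    (hm_pos : ∀ r ∈ Set.Ioo (-1 : ℝ) 1, 0 < m r)
    (hm1 : m 1 = 0) (hm1' : m (-1) = 0)
    (mε : ℝ → ℝ)
    (hmε1 : ∀ r : ℝ, |r| ≤ 1 - ε → mε r = m r)
    (hmε2 : ∀ r : ℝ, 1 - ε < r → mε r = m (1 - ε))
    (hmε3 : ∀ r : ℝ, r < -1 + ε → mε r = m (-1 + ε))
    (Mε Mε' : ℝ → ℝ)
    (hM0 : Mε 0 = 0) (hM'0 : Mε' 0 = 0)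
    (hMd1 : ∀ r : ℝ, HasDerivAt Mε (Mε' r) r)
    (hMd2 : ∀ r : ℝ, HasDerivAt Mε' (1 / mε r) r) :
    ∀ r : ℝ, (max (|r| - 1) 0) ^ 2 ≤ 2 * ε * L * Mε r :=
  stmt10_general ε L hε m hm_lip hm_pos hm1 hm1' mε hmε1 hmε2 hmε3 Mε Mε' hM0 hM'0 hMd1 hMd2
end

section
/- Let (X, 𝒜, μ) be a finite measure space, C ≥ 0, and let (f_n) be measurable functions on X with 0 ≤ f_n ≤ C μ-almost everywhere for every n and f_n → f μ-almost everywhere. Let (g_n) ⊂ L²(μ) converge weakly in L²(μ) to g ∈ L²(μ). Then ∫ f·g² dμ ≤ liminf_n ∫ f_n·g_n² dμ. -/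
/-!
Since `f_n ≥ 0`, pointwise `f_n g_n² ≥ 2 g_n (f_n g) - f_n g²`. The multipliers `f_n g` converge to
`f g` strongly in `L²` (they are dominated by `C |g|`), and pairing a weakly convergent sequence,
which is bounded by Banach–Steinhaus, with a strongly convergent one passes to the limit; hence
`∫ g_n (f_n g) → ∫ f g²`. Together with `∫ f_n g² → ∫ f g²` (dominated convergence), the lower
bounds tend to `∫ f g²`. The same bound on `‖g_n‖₂` keeps `∫ f_n g_n²` bounded, so the `liminf`
is a genuine one rather than Lean's junk value.
-/

open MeasureTheory Filter Topology

section Hilbert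

variable {𝕜 E : Type*} [RCLike 𝕜] [NormedAddCommGroup E] [InnerProductSpace 𝕜 E]

theorem exists_norm_le_of_forall_tendsto_inner [CompleteSpace E] {x : ℕ → E} {y : E}
    (hx : ∀ z, Tendsto (fun n => inner 𝕜 (x n) z) atTop (𝓝 (inner 𝕜 y z))) :
    ∃ M, ∀ n, ‖x n‖ ≤ M := by
  obtain ⟨M, hM⟩ := banach_steinhaus (g := fun n => innerSL 𝕜 (x n)) fun z => by
    obtain ⟨C, hC⟩ := (hx z).norm.bddAbove_range
    exact ⟨C, fun n => by simpa using hC ⟨n, rfl⟩⟩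
  exact ⟨M, fun n => by simpa using hM n⟩

theorem tendsto_inner_of_forall_tendsto_inner [CompleteSpace E] {x y : ℕ → E} {x₀ y₀ : E}
    (hx : ∀ z, Tendsto (fun n => inner 𝕜 (x n) z) atTop (𝓝 (inner 𝕜 x₀ z)))
    (hy : Tendsto y atTop (𝓝 y₀)) :
    Tendsto (fun n => inner 𝕜 (x n) (y n)) atTop (𝓝 (inner 𝕜 x₀ y₀)) := by
  obtain ⟨M, hM⟩ := exists_norm_le_of_forall_tendsto_inner hx
  have hsmall : Tendsto (fun n => inner 𝕜 (x n) (y n - y₀)) atTop (𝓝 0) := by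
    refine squeeze_zero_norm (fun n => (norm_inner_le_norm _ _).trans
      (mul_le_mul_of_nonneg_right (hM n) (norm_nonneg _))) ?_
    simpa using (tendsto_iff_norm_sub_tendsto_zero.1 hy).const_mul M
  simpa [inner_sub_right] using hsmall.add (hx y₀)

end Hilbert

theorem Real.norm_le_of_mem_Icc {x C : ℝ} (hx : x ∈ Set.Icc 0 C) : ‖x‖ ≤ C := by
  rw [Real.norm_of_nonneg hx.1]
  exact hx.2

section DominatedConvergence

variable {X : Type*} [MeasurableSpace X] {μ : Measure X}

theorem unifIntegrable_of_norm_le {ι E F : Type*} [NormedAddCommGroup E] [NormedAddCommGroup F]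
    {p : ENNReal} (hp : 1 ≤ p) (hp' : p ≠ ⊤) {f : ι → X → E} {h : X → F} (hh : MemLp h p μ)
    (hfh : ∀ i, ∀ᵐ x ∂μ, ‖f i x‖ ≤ ‖h x‖) : UnifIntegrable f p μ := by
  intro ε hε
  obtain ⟨δ, hδ, hhδ⟩ := hh.eLpNorm_indicator_le hp hp' hε
  refine ⟨δ, hδ, fun i s hs hμs => (eLpNorm_mono_ae ?_).trans (hhδ s hs hμs)⟩
  filter_upwards [hfh i] with x hx
  by_cases hxs : x ∈ s <;> simp [hxs, hx]

theorem MeasureTheory.MemLp.mul_of_norm_le {p : ENNReal} {f h : X → ℝ} {C : ℝ}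
    (hh : MemLp h p μ) (hf : AEStronglyMeasurable f μ) (hfC : ∀ᵐ x ∂μ, ‖f x‖ ≤ C) :
    MemLp (f * h) p μ :=
  hh.mul (memLp_top_of_bound hf C hfC)

variable {f : ℕ → X → ℝ} {flim : X → ℝ} {C : ℝ}

theorem tendsto_integral_mul_of_tendsto_ae {h : X → ℝ} (hf : ∀ n, AEStronglyMeasurable (f n) μ)
    (hfC : ∀ n, ∀ᵐ x ∂μ, ‖f n x‖ ≤ C)
    (hflim : ∀ᵐ x ∂μ, Tendsto (fun n => f n x) atTop (𝓝 (flim x))) (hh : Integrable h μ) :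
    Tendsto (fun n => ∫ x, f n x * h x ∂μ) atTop (𝓝 (∫ x, flim x * h x ∂μ)) := by
  refine tendsto_integral_of_dominated_convergence (fun x => C * ‖h x‖)
    (fun n => (hf n).mul hh.aestronglyMeasurable) (hh.norm.const_mul C) (fun n => ?_) ?_
  · filter_upwards [hfC n] with x hx
    rw [norm_mul]
    exact mul_le_mul_of_nonneg_right hx (norm_nonneg _)
  · filter_upwards [hflim] with x hx
    exact hx.mul_const _

theorem tendsto_eLpNorm_mul_sub_of_tendsto_ae [IsFiniteMeasure μ] {p : ENNReal} (hp : 1 ≤ p)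
    (hp' : p ≠ ⊤) {h : X → ℝ} (hf : ∀ n, AEStronglyMeasurable (f n) μ)
    (hfC : ∀ n, ∀ᵐ x ∂μ, ‖f n x‖ ≤ C)
    (hflim : ∀ᵐ x ∂μ, Tendsto (fun n => f n x) atTop (𝓝 (flim x))) (hfh : MemLp (flim * h) p μ)
    (hh : MemLp h p μ) :
    Tendsto (fun n => eLpNorm (f n * h - flim * h) p μ) atTop (𝓝 0) := by
  refine tendsto_Lp_finite_of_tendsto_ae hp hp' (fun n => (hf n).mul hh.1) hfh
    (unifIntegrable_of_norm_le hp hp' (hh.const_mul C) fun n => ?_) ?_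
  · filter_upwards [hfC n] with x hx
    have hC : 0 ≤ C := (norm_nonneg _).trans hx
    simp only [Pi.mul_apply, norm_mul, Real.norm_of_nonneg hC]
    exact mul_le_mul_of_nonneg_right hx (norm_nonneg _)
  · filter_upwards [hflim] with x hx
    exact hx.mul_const _

end DominatedConvergence

section L2

variable {X : Type*} [MeasurableSpace X] {μ : Measure X}

theorem MeasureTheory.MemLp.inner_toLp_eq_integral_mul {a b : X → ℝ} (ha : MemLp a 2 μ)
    (hb : MemLp b 2 μ) :
    inner ℝ (ha.toLp a) (hb.toLp b) = ∫ x, a x * b x ∂μ := by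
  rw [L2.inner_def]
  refine integral_congr_ae ?_
  filter_upwards [ha.coeFn_toLp, hb.coeFn_toLp] with x hax hbx
  simp [hax, hbx, mul_comm]

theorem MeasureTheory.MemLp.integral_sq_eq_norm_toLp_sq {a : X → ℝ} (ha : MemLp a 2 μ) :
    ∫ x, a x ^ 2 ∂μ = ‖ha.toLp a‖ ^ 2 := by
  rw [← real_inner_self_eq_norm_sq, ha.inner_toLp_eq_integral_mul]
  simp only [sq]

variable {g : ℕ → X → ℝ} {glim : X → ℝ}

theorem tendsto_inner_toLp_of_forall_tendsto_integral (hg : ∀ n, MemLp (g n) 2 μ)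
    (hglim : MemLp glim 2 μ)
    (hgweak : ∀ ζ : X → ℝ, MemLp ζ 2 μ →
      Tendsto (fun n => ∫ x, g n x * ζ x ∂μ) atTop (𝓝 (∫ x, glim x * ζ x ∂μ)))
    (Z : Lp ℝ 2 μ) :
    Tendsto (fun n => inner ℝ ((hg n).toLp (g n)) Z) atTop (𝓝 (inner ℝ (hglim.toLp glim) Z)) := by
  have hZ := Lp.memLp Z
  rw [← Lp.toLp_coeFn Z hZ]
  simpa only [MemLp.inner_toLp_eq_integral_mul] using hgweak Z hZ

theorem exists_integral_sq_le_of_forall_tendsto_integral (hg : ∀ n, MemLp (g n) 2 μ)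
    (hglim : MemLp glim 2 μ)
    (hgweak : ∀ ζ : X → ℝ, MemLp ζ 2 μ →
      Tendsto (fun n => ∫ x, g n x * ζ x ∂μ) atTop (𝓝 (∫ x, glim x * ζ x ∂μ))) :
    ∃ M, ∀ n, ∫ x, g n x ^ 2 ∂μ ≤ M := by
  obtain ⟨M, hM⟩ := exists_norm_le_of_forall_tendsto_inner
    (tendsto_inner_toLp_of_forall_tendsto_integral hg hglim hgweak)
  refine ⟨M ^ 2, fun n => ?_⟩
  rw [(hg n).integral_sq_eq_norm_toLp_sq]
  exact pow_le_pow_left₀ (norm_nonneg _) (hM n) 2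

theorem tendsto_integral_mul_of_forall_tendsto_integral {h : ℕ → X → ℝ} {hlim : X → ℝ}
    (hg : ∀ n, MemLp (g n) 2 μ) (hglim : MemLp glim 2 μ)
    (hgweak : ∀ ζ : X → ℝ, MemLp ζ 2 μ →
      Tendsto (fun n => ∫ x, g n x * ζ x ∂μ) atTop (𝓝 (∫ x, glim x * ζ x ∂μ)))
    (hh : ∀ n, MemLp (h n) 2 μ) (hhlim : MemLp hlim 2 μ)
    (hconv : Tendsto (fun n => eLpNorm (h n - hlim) 2 μ) atTop (𝓝 0)) :
    Tendsto (fun n => ∫ x, g n x * h n x ∂μ) atTop (𝓝 (∫ x, glim x * hlim x ∂μ)) := by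
  have hstrong := (Lp.tendsto_Lp_iff_tendsto_eLpNorm'' h hh hlim hhlim).2 hconv
  simpa only [MemLp.inner_toLp_eq_integral_mul] using tendsto_inner_of_forall_tendsto_inner
    (tendsto_inner_toLp_of_forall_tendsto_integral hg hglim hgweak) hstrong

theorem two_mul_integral_mul_sub_le_integral_mul_sq {f g h : X → ℝ} {C : ℝ}
    (hf : AEStronglyMeasurable f μ) (hfC : ∀ᵐ x ∂μ, f x ∈ Set.Icc 0 C) (hg : MemLp g 2 μ)
    (hh : MemLp h 2 μ) :
    2 * ∫ x, g x * (f x * h x) ∂μ - ∫ x, f x * h x ^ 2 ∂μ ≤ ∫ x, f x * g x ^ 2 ∂μ := by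
  have hf_norm : ∀ᵐ x ∂μ, ‖f x‖ ≤ C := hfC.mono fun _ => Real.norm_le_of_mem_Icc
  have hI₁ : Integrable (fun x => g x * (f x * h x)) μ :=
    hg.integrable_mul (hh.mul_of_norm_le hf hf_norm)
  have hI₂ : Integrable (fun x => f x * h x ^ 2) μ := hh.integrable_sq.bdd_mul hf hf_norm
  rw [← integral_const_mul, ← integral_sub (hI₁.const_mul 2) hI₂]
  refine integral_mono_ae ((hI₁.const_mul 2).sub hI₂) (hg.integrable_sq.bdd_mul hf hf_norm) ?_
  filter_upwards [hfC] with x hx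
  nlinarith [mul_nonneg hx.1 (sq_nonneg (g x - h x))]

theorem integral_mul_sq_le {f g : X → ℝ} {C : ℝ} (hfC : ∀ᵐ x ∂μ, f x ∈ Set.Icc 0 C)
    (hg : MemLp g 2 μ) :
    ∫ x, f x * g x ^ 2 ∂μ ≤ C * ∫ x, g x ^ 2 ∂μ := by
  rw [← integral_const_mul]
  refine integral_mono_of_nonneg ?_ (hg.integrable_sq.const_mul C) ?_ <;>
    filter_upwards [hfC] with x hx
  exacts [mul_nonneg hx.1 (sq_nonneg _), mul_le_mul_of_nonneg_right hx.2 (sq_nonneg _)]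

end L2

theorem le_liminf_of_tendsto_of_le {α β : Type*} [ConditionallyCompleteLinearOrder α]
    [TopologicalSpace α] [OrderTopology α] {l : Filter β} [l.NeBot] {u v : β → α} {a : α}
    (hv : Tendsto v l (𝓝 a)) (hvu : v ≤ᶠ[l] u) (hu : IsCoboundedUnder (· ≥ ·) l u) :
    a ≤ liminf u l :=
  hv.liminf_eq ▸ liminf_le_liminf hvu hv.isBoundedUnder_ge hu

/-- On a finite measure space, if `(f_n)` are measurable with `0 ≤ f_n ≤ C` a.e. and
`f_n → f` a.e., and `(g_n) ⊂ L²(μ)` converges weakly in `L²(μ)` to `g ∈ L²(μ)`, then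
`∫ f·g² dμ ≤ liminf_n ∫ f_n·g_n² dμ`. -/
theorem stmt12 {X : Type*} [MeasurableSpace X] (μ : Measure X) [IsFiniteMeasure μ]
    (C : ℝ) (hC : 0 ≤ C)
    (f : ℕ → X → ℝ) (flim : X → ℝ)
    (hfmeas : ∀ n, Measurable (f n))
    (hfbd : ∀ n, ∀ᵐ x ∂μ, f n x ∈ Set.Icc (0 : ℝ) C)
    (hfconv : ∀ᵐ x ∂μ, Tendsto (fun n => f n x) atTop (nhds (flim x)))
    (g : ℕ → X → ℝ) (glim : X → ℝ)
    (hg : ∀ n, MemLp (g n) 2 μ) (hglim : MemLp glim 2 μ)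
    (hgweak : ∀ ζ : X → ℝ, MemLp ζ 2 μ →
      Tendsto (fun n => ∫ x, g n x * ζ x ∂μ) atTop (nhds (∫ x, glim x * ζ x ∂μ))) :
    ∫ x, flim x * (glim x) ^ 2 ∂μ ≤
      Filter.atTop.liminf (fun n => ∫ x, f n x * (g n x) ^ 2 ∂μ) := by
  have hf_meas n : AEStronglyMeasurable (f n) μ := (hfmeas n).aestronglyMeasurable
  have hf_norm n : ∀ᵐ x ∂μ, ‖f n x‖ ≤ C := (hfbd n).mono fun _ => Real.norm_le_of_mem_Icc
  have hflim_norm : ∀ᵐ x ∂μ, ‖flim x‖ ≤ C := by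
    filter_upwards [ae_all_iff.2 hf_norm, hfconv] with x hx hconv
    exact le_of_tendsto' hconv.norm hx
  have hflim_meas : AEStronglyMeasurable flim μ :=
    aestronglyMeasurable_of_tendsto_ae atTop hf_meas hfconv
  have hcross : Tendsto (fun n => ∫ x, g n x * (f n x * glim x) ∂μ) atTop
      (𝓝 (∫ x, flim x * glim x ^ 2 ∂μ)) := by
    have hflim_glim := hglim.mul_of_norm_le hflim_meas hflim_norm
    convert tendsto_integral_mul_of_forall_tendsto_integral hg hglim hgweak
      (fun n => hglim.mul_of_norm_le (hf_meas n) (hf_norm n)) hflim_glim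
      (tendsto_eLpNorm_mul_sub_of_tendsto_ae one_le_two ENNReal.ofNat_ne_top hf_meas hf_norm
        hfconv hflim_glim hglim) using 2
    · rfl
    · exact integral_congr_ae (Eventually.of_forall fun x => by simp only [Pi.mul_apply]; ring)
  have hdiag := tendsto_integral_mul_of_tendsto_ae hf_meas hf_norm hfconv hglim.integrable_sq
  obtain ⟨M, hM⟩ := exists_integral_sq_le_of_forall_tendsto_integral hg hglim hgweak
  have hupper n : ∫ x, f n x * g n x ^ 2 ∂μ ≤ C * M :=
    (integral_mul_sq_le (hfbd n) (hg n)).trans (mul_le_mul_of_nonneg_left (hM n) hC)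
  refine le_liminf_of_tendsto_of_le ?_ (Eventually.of_forall fun n =>
    two_mul_integral_mul_sub_le_integral_mul_sq (hf_meas n) (hfbd n) (hg n) hglim)
    (isCoboundedUnder_ge_of_le atTop hupper)
  simpa [two_mul] using (hcross.const_mul 2).sub hdiag
end

section
/- Let (X, 𝒜, μ) be a finite measure space, E a real normed vector space, and j : E → L^∞(μ) a continuous linear map (hence j is also continuous from E into L²(μ)). Let Φ : ℝ → ℝ be twice continuously differentiable with Φ'' bounded on ℝ. Then the functional ℰ : E → ℝ, ℰ(v) := ∫_X Φ(j(v)) dμ, is twice Fréchet differentiable on E, with first derivative Dℰ(v)h = ∫_X Φ'(j(v))·j(h) dμ and second derivative D²ℰ(v)[h,k] = ∫_X Φ''(j(v))·j(h)·j(k) dμ for all v, h, k ∈ E. -/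
/-!
On `L^∞(μ)` the superposition operator `u ↦ f ∘ u` of a `C¹` function `f : ℝ → ℝ` is Fréchet
differentiable, with derivative `w ↦ f'(u) · w`: the values of `u` stay a.e. in the compact
interval `[-‖u‖, ‖u‖]`, on which `f'` is uniformly continuous, so the first-order Taylor remainder
of `f` at `u x` is `o(‖w‖_∞)` uniformly in `x`. For a finite measure, integration is a continuous
linear functional on `L^∞`, so `u ↦ ∫ Φ(u)` has derivative `w ↦ ∫ Φ'(u) w`, and applying the same
fact to `Φ'` differentiates this derivative once more. Everything is then pulled back along `j`.
-/

open MeasureTheory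

section Taylor

variable {f f' : ℝ → ℝ}

theorem abs_sub_sub_mul_le_of_hasDerivAt {a b ε : ℝ}
    (hf : ∀ t ∈ Set.uIcc a b, HasDerivAt f (f' t) t)
    (hε : ∀ t ∈ Set.uIcc a b, |f' t - f' a| ≤ ε) :
    |f b - f a - f' a * (b - a)| ≤ ε * |b - a| := by
  have hg : ∀ t ∈ Set.uIcc a b,
      HasDerivWithinAt (fun t => f t - f' a * t) (f' t - f' a) (Set.uIcc a b) t := fun t ht =>
    (((hf t ht).sub ((hasDerivAt_id t).const_mul (f' a))).congr_deriv (by simp)).hasDerivWithinAt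
  have := Convex.norm_image_sub_le_of_norm_hasDerivWithin_le hg hε (convex_uIcc a b)
    Set.left_mem_uIcc Set.right_mem_uIcc
  simp only [Real.norm_eq_abs] at this
  convert this using 2
  ring

theorem exists_pos_abs_sub_sub_mul_le (hf : ∀ t, HasDerivAt f (f' t) t) (hf' : Continuous f')
    (R : ℝ) {ε : ℝ} (hε : 0 < ε) :
    ∃ δ > 0, ∀ a b : ℝ, |a| ≤ R → |b - a| < δ →
      |f b - f a - f' a * (b - a)| ≤ ε * |b - a| := by
  obtain ⟨δ, hδ, hunif⟩ := Metric.uniformContinuousOn_iff_le.1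
    ((isCompact_closedBall (0 : ℝ) (R + 1)).uniformContinuousOn_of_continuous hf'.continuousOn)
    ε hε
  refine ⟨min δ 1, by positivity, fun a b ha hab => ?_⟩
  refine abs_sub_sub_mul_le_of_hasDerivAt (fun t _ => hf t) fun t ht => ?_
  have hta : |t - a| < min δ 1 := (Set.abs_sub_left_of_mem_uIcc ht).trans_lt hab
  have hmem : ∀ s, |s - a| ≤ 1 → s ∈ Metric.closedBall (0 : ℝ) (R + 1) := fun s hs => by
    rw [mem_closedBall_zero_iff, Real.norm_eq_abs]
    linarith [abs_sub_abs_le_abs_sub s a]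
  rw [← Real.dist_eq]
  exact hunif t (hmem t (hta.le.trans (min_le_right δ 1))) a (hmem a (by simp))
    ((Real.dist_eq t a).trans_le (hta.le.trans (min_le_left δ 1)))

end Taylor

section LpTop

variable {X : Type*} [MeasurableSpace X] {μ : Measure X}

namespace MeasureTheory.Lp

theorem ae_norm_le_norm_top {E : Type*} [NormedAddCommGroup E] (u : Lp E ⊤ μ) :
    ∀ᵐ x ∂μ, ‖u x‖ ≤ ‖u‖ := by
  have h := ae_le_lpNorm_exponent_top (Lp.memLp u)
  rwa [← toReal_eLpNorm (Lp.aestronglyMeasurable u), ← Lp.norm_def] at h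

theorem norm_le_of_ae_bound_top {E : Type*} [NormedAddCommGroup E] {u : Lp E ⊤ μ} {C : ℝ}
    (hC : 0 ≤ C) (h : ∀ᵐ x ∂μ, ‖u x‖ ≤ C) : ‖u‖ ≤ C := by
  rw [Lp.norm_def, eLpNorm_exponent_top]
  exact ENNReal.toReal_le_of_le_ofReal hC (eLpNormEssSup_le_of_ae_bound h)

variable (μ) in
noncomputable def mulTopL : Lp ℝ ⊤ μ →L[ℝ] Lp ℝ ⊤ μ →L[ℝ] Lp ℝ ⊤ μ :=
  (ContinuousLinearMap.mul ℝ ℝ).holderL μ ⊤ ⊤ ⊤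

theorem coeFn_mulTopL (g w : Lp ℝ ⊤ μ) : mulTopL μ g w =ᵐ[μ] fun x => g x * w x :=
  (ContinuousLinearMap.mul ℝ ℝ).coeFn_holder _ _

variable (μ) in
noncomputable def integralTopL [IsFiniteMeasure μ] : Lp ℝ ⊤ μ →L[ℝ] ℝ :=
  (ContinuousLinearMap.mul ℝ ℝ).lpPairing μ 1 ⊤ (Lp.const 1 μ 1)

theorem integralTopL_apply [IsFiniteMeasure μ] (w : Lp ℝ ⊤ μ) :
    integralTopL μ w = ∫ x, w x ∂μ := by
  rw [integralTopL, ContinuousLinearMap.lpPairing_eq_integral]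
  refine integral_congr_ae ?_
  filter_upwards [Lp.coeFn_const (p := 1) (μ := μ) (1 : ℝ)] with x hx
  rw [hx, Function.const_apply, ContinuousLinearMap.mul_apply', one_mul]

theorem integralTopL_mulTopL [IsFiniteMeasure μ] {g : Lp ℝ ⊤ μ} {g' : X → ℝ}
    (hg : g =ᵐ[μ] g') (w : Lp ℝ ⊤ μ) :
    integralTopL μ (mulTopL μ g w) = ∫ x, g' x * w x ∂μ := by
  rw [integralTopL_apply]
  refine integral_congr_ae ?_
  filter_upwards [coeFn_mulTopL g w, hg] with x hgw hx
  rw [hgw, hx]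

end MeasureTheory.Lp

section Superposition

variable {E F : Type*} [NormedAddCommGroup E] [ProperSpace E] [NormedAddCommGroup F]

theorem Continuous.memLp_comp_lpTop {f : E → F} (hf : Continuous f) (u : Lp E ⊤ μ) :
    MemLp (fun x => f (u x)) ⊤ μ := by
  obtain ⟨C, hC⟩ :=
    (isCompact_closedBall (0 : E) ‖u‖).exists_bound_of_continuousOn hf.continuousOn
  refine memLp_top_of_bound (hf.comp_aestronglyMeasurable (Lp.aestronglyMeasurable u)) C ?_
  filter_upwards [Lp.ae_norm_le_norm_top u] with x hx
  exact hC _ (mem_closedBall_zero_iff.2 hx)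

noncomputable def Continuous.compLpTop {f : E → F} (hf : Continuous f) (u : Lp E ⊤ μ) :
    Lp F ⊤ μ :=
  (hf.memLp_comp_lpTop u).toLp _

theorem Continuous.coeFn_compLpTop {f : E → F} (hf : Continuous f) (u : Lp E ⊤ μ) :
    hf.compLpTop u =ᵐ[μ] fun x => f (u x) :=
  MemLp.coeFn_toLp _

end Superposition

section Differentiability

variable {f : ℝ → ℝ}

theorem ContDiff.hasFDerivAt_compLpTop (hf : ContDiff ℝ 1 f) (u : Lp ℝ ⊤ μ) :
    HasFDerivAt hf.continuous.compLpTop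
      (Lp.mulTopL μ ((hf.continuous_deriv le_rfl).compLpTop u)) u := by
  rw [hasFDerivAt_iff_isLittleO_nhds_zero, Asymptotics.isLittleO_iff]
  intro ε hε
  obtain ⟨δ, hδ, hTaylor⟩ := exists_pos_abs_sub_sub_mul_le
    (fun t => ((hf.differentiable one_ne_zero) t).hasDerivAt) (hf.continuous_deriv le_rfl) ‖u‖ hε
  filter_upwards [Metric.ball_mem_nhds (0 : Lp ℝ ⊤ μ) hδ] with w hw
  rw [mem_ball_zero_iff] at hw
  refine Lp.norm_le_of_ae_bound_top (by positivity) ?_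
  filter_upwards [Lp.coeFn_sub (hf.continuous.compLpTop (u + w) - hf.continuous.compLpTop u)
      (Lp.mulTopL μ ((hf.continuous_deriv le_rfl).compLpTop u) w),
    Lp.coeFn_sub (hf.continuous.compLpTop (u + w)) (hf.continuous.compLpTop u),
    hf.continuous.coeFn_compLpTop (u + w), hf.continuous.coeFn_compLpTop u,
    Lp.coeFn_mulTopL ((hf.continuous_deriv le_rfl).compLpTop u) w,
    (hf.continuous_deriv le_rfl).coeFn_compLpTop u, Lp.coeFn_add u w,
    Lp.ae_norm_le_norm_top u, Lp.ae_norm_le_norm_top w] with x h₁ h₂ h₃ h₄ h₅ h₆ h₇ hu hw'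
  simp only [Pi.sub_apply, Pi.add_apply] at h₁ h₂ h₇
  rw [h₁, h₂, h₃, h₄, h₅, h₆, h₇, Real.norm_eq_abs]
  have := hTaylor (u x) (u x + w x) hu (by simpa using hw'.trans_lt hw)
  simp only [add_sub_cancel_left] at this
  exact this.trans (mul_le_mul_of_nonneg_left hw' hε.le)

variable [IsFiniteMeasure μ]

theorem ContDiff.hasFDerivAt_integral_comp_lpTop (hf : ContDiff ℝ 1 f) (u : Lp ℝ ⊤ μ) :
    HasFDerivAt (fun u : Lp ℝ ⊤ μ => ∫ x, f (u x) ∂μ)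
      (Lp.integralTopL μ ∘L Lp.mulTopL μ ((hf.continuous_deriv le_rfl).compLpTop u)) u := by
  have h : (fun u : Lp ℝ ⊤ μ => ∫ x, f (u x) ∂μ) =
      Lp.integralTopL μ ∘ hf.continuous.compLpTop := by
    funext u
    rw [Function.comp_apply, Lp.integralTopL_apply]
    exact integral_congr_ae (hf.continuous.coeFn_compLpTop u).symm
  rw [h]
  exact (Lp.integralTopL μ).hasFDerivAt.comp u (hf.hasFDerivAt_compLpTop u)

theorem ContDiff.hasFDerivAt_integralTopL_mulTopL_compLpTop (hf : ContDiff ℝ 1 f)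
    (u : Lp ℝ ⊤ μ) :
    HasFDerivAt (fun u => Lp.integralTopL μ ∘L Lp.mulTopL μ (hf.continuous.compLpTop u))
      ((ContinuousLinearMap.compL ℝ _ _ ℝ (Lp.integralTopL μ) ∘L Lp.mulTopL μ) ∘L
        Lp.mulTopL μ ((hf.continuous_deriv le_rfl).compLpTop u)) u :=
  (ContinuousLinearMap.compL ℝ _ _ ℝ (Lp.integralTopL μ) ∘L Lp.mulTopL μ).hasFDerivAt.comp u
    (hf.hasFDerivAt_compLpTop u)

end Differentiability

end LpTop

theorem stmt13_general {X : Type*} [MeasurableSpace X] (μ : Measure X) [IsFiniteMeasure μ]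
    {E : Type*} [NormedAddCommGroup E] [NormedSpace ℝ E]
    (j : E →L[ℝ] Lp ℝ ⊤ μ)
    (Φ : ℝ → ℝ) (hΦ : ContDiff ℝ 2 Φ) :
    ∃ (D : E → E →L[ℝ] ℝ) (D2 : E → E →L[ℝ] E →L[ℝ] ℝ),
      (∀ v : E, HasFDerivAt (fun w : E => ∫ x, Φ ((j w) x) ∂μ) (D v) v) ∧
      (∀ v : E, HasFDerivAt D (D2 v) v) ∧
      (∀ v h : E, D v h = ∫ x, deriv Φ ((j v) x) * (j h) x ∂μ) ∧
      (∀ v h k : E, D2 v h k = ∫ x, deriv (deriv Φ) ((j v) x) * (j h) x * (j k) x ∂μ) := by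
  have hΦ₁ : ContDiff ℝ 1 Φ := hΦ.of_le one_le_two
  have hΦ'₁ : ContDiff ℝ 1 (deriv Φ) := hΦ.deriv' (n := 1)
  have hΦ' : Continuous (deriv Φ) := hΦ₁.continuous_deriv le_rfl
  have hΦ'' : Continuous (deriv (deriv Φ)) := hΦ'₁.continuous_deriv le_rfl
  set I := Lp.integralTopL μ
  set M := Lp.mulTopL μ
  -- precomposition with `j` on `L^∞`-functionals
  set P := (ContinuousLinearMap.compL ℝ E (Lp ℝ ⊤ μ) ℝ).flip j
  set A := ContinuousLinearMap.compL ℝ (Lp ℝ ⊤ μ) (Lp ℝ ⊤ μ) ℝ I ∘L M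
  refine ⟨fun v => P (I ∘L M (hΦ'.compLpTop (j v))),
    fun v => P ∘L A ∘L M (hΦ''.compLpTop (j v)) ∘L j,
    fun v => (hΦ₁.hasFDerivAt_integral_comp_lpTop (j v)).comp v j.hasFDerivAt,
    fun v => P.hasFDerivAt.comp v
      ((hΦ'₁.hasFDerivAt_integralTopL_mulTopL_compLpTop (j v)).comp v j.hasFDerivAt),
    fun v h => Lp.integralTopL_mulTopL (hΦ'.coeFn_compLpTop (j v)) (j h),
    fun v h k => Lp.integralTopL_mulTopL ?_ (j k)⟩
  exact (Lp.coeFn_mulTopL _ _).trans ((hΦ''.coeFn_compLpTop (j v)).mul .rfl)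

/-- Let `(X, μ)` be a finite measure space, `E` a real normed space, and `j : E → L^∞(μ)` a
continuous linear map. Let `Φ : ℝ → ℝ` be `C²` with `Φ''` bounded. Then
`ℰ(v) := ∫ Φ(j(v)) dμ` is twice Fréchet differentiable on `E`, with
`Dℰ(v)h = ∫ Φ'(j(v))·j(h) dμ` and `D²ℰ(v)[h,k] = ∫ Φ''(j(v))·j(h)·j(k) dμ`. -/
theorem stmt13 {X : Type*} [MeasurableSpace X] (μ : Measure X) [IsFiniteMeasure μ]
    {E : Type*} [NormedAddCommGroup E] [NormedSpace ℝ E]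
    (j : E →L[ℝ] Lp ℝ ⊤ μ)
    (Φ : ℝ → ℝ) (hΦ : ContDiff ℝ 2 Φ)
    (C : ℝ) (hΦ'' : ∀ x : ℝ, |deriv (deriv Φ) x| ≤ C) :
    ∃ (D : E → E →L[ℝ] ℝ) (D2 : E → E →L[ℝ] E →L[ℝ] ℝ),
      (∀ v : E, HasFDerivAt (fun w : E => ∫ x, Φ ((j w) x) ∂μ) (D v) v) ∧
      (∀ v : E, HasFDerivAt D (D2 v) v) ∧
      (∀ v h : E, D v h = ∫ x, deriv Φ ((j v) x) * (j h) x ∂μ) ∧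
      (∀ v h k : E, D2 v h k = ∫ x, deriv (deriv Φ) ((j v) x) * (j h) x * (j k) x ∂μ) :=
  stmt13_general μ j Φ hΦ
end

section
/- Let ε ∈ (0,1/4). Let F₁ : (−1,1) → ℝ be C² and convex, F₂ : [−1,1] → ℝ be C², and set F := F₁ + F₂ on (−1,1). Let g : [−1,1] → ℝ be bounded. Define: F̃₂ : ℝ → ℝ as the quadratic C² extension of F₂ (F̃₂ = F₂ on [−1,1], and F̃₂''(r) = F₂''(1) for r > 1, F̃₂''(r) = F₂''(−1) for r < −1); F₁,ε'' : ℝ → ℝ by F₁,ε''(r) = F₁''(r) for |r| ≤ 1−ε, F₁,ε''(r) = F₁''(1−ε) for r > 1−ε, F₁,ε''(r) = F₁''(−1+ε) for r < −1+ε; F_ε'' := F₁,ε'' + F̃₂''; and g_ε : ℝ → ℝ by g_ε(r) = g(r) for |r| ≤ 1−ε, g_ε(r) = g(1−ε) for r > 1−ε, g_ε(r) = g(−1+ε) for r < −1+ε. Suppose S := sup_{r∈(−1,1)} |F''(r)|·g(r)² < ∞. Then for every r ∈ ℝ, F_ε''(r)·g_ε(r)² ≤ S + 2·(sup_{[−1,1]}|F₂''|)·(sup_{[−1,1]}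 g²). -/
/-- Let `ε ∈ (0,1/4)`, `F₁` be `C²` and convex on `(−1,1)`, `F₂` be `C²` on `[−1,1]`,
`F = F₁ + F₂`, and `g : [−1,1] → ℝ` bounded. With `F̃₂''` the quadratic-extension second
derivative, `F₁,ε''` and `g_ε` the truncations at level `1−ε`, and
`S = sup_{(−1,1)} |F''|·g²`, one has, for every `r ∈ ℝ`,
`F_ε''(r)·g_ε(r)² ≤ S + 2·(sup_{[−1,1]}|F₂''|)·(sup_{[−1,1]} g²)`. -/
theorem stmt16 (ε : ℝ) (hε : ε ∈ Set.Ioo (0 : ℝ) (1 / 4))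
    (F₁ F₁' F₁'' : ℝ → ℝ)
    (hF₁d1 : ∀ r ∈ Set.Ioo (-1 : ℝ) 1, HasDerivAt F₁ (F₁' r) r)
    (hF₁d2 : ∀ r ∈ Set.Ioo (-1 : ℝ) 1, HasDerivAt F₁' (F₁'' r) r)
    (hF₁c : ContinuousOn F₁'' (Set.Ioo (-1 : ℝ) 1))
    (hF₁conv : ConvexOn ℝ (Set.Ioo (-1 : ℝ) 1) F₁)
    (F₂ F₂' F₂'' : ℝ → ℝ)
    (hF₂d1 : ∀ r ∈ Set.Icc (-1 : ℝ) 1, HasDerivWithinAt F₂ (F₂' r) (Set.Icc (-1 : ℝ) 1) r)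
    (hF₂d2 : ∀ r ∈ Set.Icc (-1 : ℝ) 1, HasDerivWithinAt F₂' (F₂'' r) (Set.Icc (-1 : ℝ) 1) r)
    (hF₂c : ContinuousOn F₂'' (Set.Icc (-1 : ℝ) 1))
    (g : ℝ → ℝ) (B : ℝ) (hg : ∀ r ∈ Set.Icc (-1 : ℝ) 1, |g r| ≤ B)
    (hS : BddAbove ((fun r => |F₁'' r + F₂'' r| * (g r) ^ 2) '' Set.Ioo (-1 : ℝ) 1)) :
    ∀ r : ℝ,
      ((if |r| ≤ 1 - ε then F₁'' r else if 1 - ε < r then F₁'' (1 - ε) else F₁'' (-1 + ε)) +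
        (if |r| ≤ 1 then F₂'' r else if 1 < r then F₂'' 1 else F₂'' (-1))) *
      (if |r| ≤ 1 - ε then g r else if 1 - ε < r then g (1 - ε) else g (-1 + ε)) ^ 2
      ≤ sSup ((fun r => |F₁'' r + F₂'' r| * (g r) ^ 2) '' Set.Ioo (-1 : ℝ) 1)
        + 2 * sSup ((fun s => |F₂'' s|) '' Set.Icc (-1 : ℝ) 1)
            * sSup ((fun s => (g s) ^ 2) '' Set.Icc (-1 : ℝ) 1) := by
  obtain ⟨hε0, hε4⟩ := hε
  set S := sSup ((fun r => |F₁'' r + F₂'' r| * (g r) ^ 2) '' Set.Ioo (-1 : ℝ) 1) with hSdef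
  set M := sSup ((fun s => |F₂'' s|) '' Set.Icc (-1 : ℝ) 1) with hMdef
  set G := sSup ((fun s => (g s) ^ 2) '' Set.Icc (-1 : ℝ) 1) with hGdef
  have hbM : BddAbove ((fun s => |F₂'' s|) '' Set.Icc (-1 : ℝ) 1) :=
    (isCompact_Icc.image_of_continuousOn hF₂c.abs).bddAbove
  have hbG : BddAbove ((fun s => (g s) ^ 2) '' Set.Icc (-1 : ℝ) 1) := by
    refine ⟨B ^ 2, ?_⟩
    rintro y ⟨s, hs, rfl⟩
    calc (g s) ^ 2 = |g s| ^ 2 := (sq_abs _).symm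
      _ ≤ B ^ 2 := pow_le_pow_left₀ (abs_nonneg _) (hg s hs) 2
  have key : ∀ a ∈ Set.Ioo (-1 : ℝ) 1, ∀ s ∈ Set.Icc (-1 : ℝ) 1,
      (F₁'' a + F₂'' s) * (g a) ^ 2 ≤ S + 2 * M * G := by
    intro a ha s hs
    have haI : a ∈ Set.Icc (-1 : ℝ) 1 := ⟨ha.1.le, ha.2.le⟩
    have h1 : (F₁'' a + F₂'' a) * (g a) ^ 2 ≤ S := by
      have hmem : |F₁'' a + F₂'' a| * (g a) ^ 2 ≤ S := le_csSup hS ⟨a, ha, rfl⟩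
      have := mul_le_mul_of_nonneg_right (le_abs_self (F₁'' a + F₂'' a)) (sq_nonneg (g a))
      linarith
    have hMs : |F₂'' s| ≤ M := le_csSup hbM ⟨s, hs, rfl⟩
    have hMa : |F₂'' a| ≤ M := le_csSup hbM ⟨a, haI, rfl⟩
    have hGa : (g a) ^ 2 ≤ G := le_csSup hbG ⟨a, haI, rfl⟩
    have hM0 : (0 : ℝ) ≤ M := le_trans (abs_nonneg _) hMs
    have h2 : (F₂'' s - F₂'' a) * (g a) ^ 2 ≤ 2 * M * G := by
      calc (F₂'' s - F₂'' a) * (g a) ^ 2 ≤ (M + M) * (g a) ^ 2 := by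
            refine mul_le_mul_of_nonneg_right ?_ (sq_nonneg _)
            have := le_abs_self (F₂'' s)
            have := neg_abs_le (F₂'' a)
            linarith
        _ ≤ (M + M) * G := by nlinarith [sq_nonneg (g a)]
        _ = 2 * M * G := by ring
    nlinarith
  intro r
  by_cases h1 : |r| ≤ 1 - ε
  · have habs := abs_le.mp h1
    have h1' : |r| ≤ 1 := by linarith
    simp only [if_pos h1, if_pos h1']
    exact key r ⟨by linarith, by linarith⟩ r ⟨by linarith, by linarith⟩
  · by_cases h2 : 1 - ε < r
    · simp only [if_neg h1, if_pos h2]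
      have ha : (1 - ε : ℝ) ∈ Set.Ioo (-1 : ℝ) 1 := ⟨by linarith, by linarith⟩
      by_cases h3 : |r| ≤ 1
      · rw [if_pos h3]
        exact key _ ha r (abs_le.mp h3)
      · by_cases h4 : 1 < r
        · rw [if_neg h3, if_pos h4]
          exact key _ ha 1 ⟨by linarith, le_refl _⟩
        · exact absurd (abs_le.mpr ⟨by linarith, by linarith⟩) h3
    · simp only [if_neg h1, if_neg h2]
      have ha : (-1 + ε : ℝ) ∈ Set.Ioo (-1 : ℝ) 1 := ⟨by linarith, by linarith⟩
      have hr : r ≤ 1 - ε := le_of_not_gt h2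
      by_cases h3 : |r| ≤ 1
      · rw [if_pos h3]
        exact key _ ha r (abs_le.mp h3)
      · rw [if_neg h3, if_neg (show ¬ (1 : ℝ) < r by intro h; linarith)]
        exact key _ ha (-1) ⟨le_refl _, by linarith⟩
end

section
/- Let 0 < θ < θ₀, and let (g_k)_{k∈ℕ} be functions g_k : [−1,1] → ℝ such that each g_k is Lipschitz continuous with constant L_k, g_k(−1) = g_k(1) = 0 for every k, and ∑_{k} L_k² < ∞. Then ∑_{k} sup_{r∈(−1,1)} g_k(r)²·|F_log''(r)| ≤ 2·(θ + 4θ₀)·∑_{k} L_k² < ∞, where F_log''(r) = θ/(1−r²) − θ₀. -/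
lemma stmt19_key (θ θ₀ L gv r : ℝ) (hθ : 0 < θ) (hθ₀ : 0 < θ₀) (hL : 0 ≤ L)
    (hr : r ∈ Set.Ioo (-1 : ℝ) 1) (h1 : |gv| ≤ L * (1 + r)) (h2 : |gv| ≤ L * (1 - r)) :
    gv ^ 2 * |θ / (1 - r ^ 2) - θ₀| ≤ 2 * (θ + 4 * θ₀) * L ^ 2 := by
  obtain ⟨hr1, hr2⟩ := hr
  have hu : 0 < 1 - r ^ 2 := by nlinarith
  have habs : |θ / (1 - r ^ 2) - θ₀| ≤ θ / (1 - r ^ 2) + θ₀ := by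
    have := abs_sub (θ / (1 - r ^ 2)) θ₀
    rwa [abs_of_pos (div_pos hθ hu), abs_of_pos hθ₀] at this
  have hg2 : gv ^ 2 ≤ L ^ 2 * (1 - r ^ 2) := by nlinarith [sq_abs gv, abs_nonneg gv]
  have hg4 : gv ^ 2 ≤ 4 * L ^ 2 := by nlinarith [sq_abs gv, abs_nonneg gv]
  have hgnn : 0 ≤ gv ^ 2 := sq_nonneg gv
  have step1 : gv ^ 2 * |θ / (1 - r ^ 2) - θ₀| ≤ gv ^ 2 * (θ / (1 - r ^ 2) + θ₀) :=
    mul_le_mul_of_nonneg_left habs hgnn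
  have step2 : gv ^ 2 * (θ / (1 - r ^ 2)) ≤ L ^ 2 * θ := by
    rw [mul_div_assoc', div_le_iff₀ hu]
    nlinarith
  have step3 : gv ^ 2 * θ₀ ≤ 4 * L ^ 2 * θ₀ :=
    mul_le_mul_of_nonneg_right hg4 hθ₀.le
  calc gv ^ 2 * |θ / (1 - r ^ 2) - θ₀| ≤ gv ^ 2 * (θ / (1 - r ^ 2) + θ₀) := step1
    _ = gv ^ 2 * (θ / (1 - r ^ 2)) + gv ^ 2 * θ₀ := by ring
    _ ≤ L ^ 2 * θ + 4 * L ^ 2 * θ₀ := add_le_add step2 step3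
    _ ≤ 2 * (θ + 4 * θ₀) * L ^ 2 := by nlinarith [sq_nonneg L]

/-- Let `0 < θ < θ₀` and let `(g_k)` be functions on `[−1,1]`, each `L_k`-Lipschitz, vanishing
at `±1`, with `∑ L_k² < ∞`. Then `∑_k sup_{(−1,1)} g_k(r)²·|F_log''(r)|` is finite and bounded
by `2·(θ + 4θ₀)·∑_k L_k²`, where `F_log''(r) = θ/(1−r²) − θ₀`. -/
theorem stmt19 (θ θ₀ : ℝ) (hθ : 0 < θ) (hθθ₀ : θ < θ₀)
    (g : ℕ → ℝ → ℝ) (L : ℕ → ℝ)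
    (hlip : ∀ k, ∀ x ∈ Set.Icc (-1 : ℝ) 1, ∀ y ∈ Set.Icc (-1 : ℝ) 1,
      |g k x - g k y| ≤ L k * |x - y|)
    (hgm : ∀ k, g k (-1) = 0) (hgp : ∀ k, g k 1 = 0)
    (hsum : Summable (fun k => (L k) ^ 2)) :
    Summable (fun k =>
      sSup ((fun r => (g k r) ^ 2 * |θ / (1 - r ^ 2) - θ₀|) '' Set.Ioo (-1 : ℝ) 1)) ∧
    ∑' k, sSup ((fun r => (g k r) ^ 2 * |θ / (1 - r ^ 2) - θ₀|) '' Set.Ioo (-1 : ℝ) 1)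
      ≤ 2 * (θ + 4 * θ₀) * ∑' k, (L k) ^ 2 := by
  have hθ₀ : 0 < θ₀ := hθ.trans hθθ₀
  have hL : ∀ k, 0 ≤ L k := by
    intro k
    have h := hlip k 1 (by norm_num) (-1) (by norm_num)
    norm_num at h
    have : (0:ℝ) ≤ L k * 2 := le_trans (abs_nonneg (g k 1 - g k (-1))) h
    linarith
  have hbound : ∀ k, ∀ x ∈ ((fun r => (g k r) ^ 2 * |θ / (1 - r ^ 2) - θ₀|) '' Set.Ioo (-1 : ℝ) 1),
      x ≤ 2 * (θ + 4 * θ₀) * (L k) ^ 2 := by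
    rintro k x ⟨r, hr, rfl⟩
    have hrI : r ∈ Set.Icc (-1 : ℝ) 1 := Set.Ioo_subset_Icc_self hr
    have h1 : |g k r| ≤ L k * (1 + r) := by
      have := hlip k r hrI (-1) (by norm_num)
      rw [hgm k] at this
      simpa [abs_of_nonneg (by linarith [hr.1] : (0:ℝ) ≤ r + 1), sub_zero,
        add_comm] using this
    have h2 : |g k r| ≤ L k * (1 - r) := by
      have := hlip k r hrI 1 (by norm_num)
      rw [hgp k] at this
      rwa [sub_zero, abs_of_nonpos (by linarith [hr.2] : r - 1 ≤ 0), neg_sub] at this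
    exact stmt19_key θ θ₀ (L k) (g k r) r hθ hθ₀ (hL k) hr h1 h2
  have hMnn : ∀ k, (0:ℝ) ≤ 2 * (θ + 4 * θ₀) * (L k) ^ 2 := fun k => by positivity
  have hsle : ∀ k, sSup ((fun r => (g k r) ^ 2 * |θ / (1 - r ^ 2) - θ₀|) '' Set.Ioo (-1 : ℝ) 1)
      ≤ 2 * (θ + 4 * θ₀) * (L k) ^ 2 := fun k => Real.sSup_le (hbound k) (hMnn k)
  have hnn : ∀ k, 0 ≤ sSup ((fun r => (g k r) ^ 2 * |θ / (1 - r ^ 2) - θ₀|) '' Set.Ioo (-1 : ℝ) 1) := by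
    intro k
    apply Real.sSup_nonneg
    rintro x ⟨r, hr, rfl⟩
    positivity
  have hsum' : Summable (fun k => 2 * (θ + 4 * θ₀) * (L k) ^ 2) := hsum.mul_left _
  have hS : Summable (fun k =>
      sSup ((fun r => (g k r) ^ 2 * |θ / (1 - r ^ 2) - θ₀|) '' Set.Ioo (-1 : ℝ) 1)) :=
    Summable.of_nonneg_of_le hnn hsle hsum'
  refine ⟨hS, ?_⟩
  calc ∑' k, sSup ((fun r => (g k r) ^ 2 * |θ / (1 - r ^ 2) - θ₀|) '' Set.Ioo (-1 : ℝ) 1)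
      ≤ ∑' k, 2 * (θ + 4 * θ₀) * (L k) ^ 2 := Summable.tsum_le_tsum hsle hS hsum'
    _ = 2 * (θ + 4 * θ₀) * ∑' k, (L k) ^ 2 := tsum_mul_left
end
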